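/- (Shielding theorem for the transverse Ising chain) Consider N qubits with Hamiltonian H = -∑_{i=1}^{N-1} Jᵢ σᵢ^z σ_{i+1}^z - ∑_{i=1}^N hᵢ σᵢ^x, and suppose h_L = 0 for some 1 < L < N. Then the reduced state, over sites L,…,N, of the Gibbs state exp(-βH)/Tr(exp(-βH)) equals exp(-βH″)/Tr(exp(-βH″)), where H″ = -∑_{i=L}^{N-1}(Jᵢ σᵢ^z σ_{i+1}^z + h_{i+1} σ_{i+1}^x) acts only on sites L,…,N. In particular it is independent of h₁,…,h_{L-1} and J₁,…,J_{L-1}. -/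

import Mathlib

open Matrix Complex

noncomputable section

/-- Pauli X matrix. -/
def σx : Matrix (Fin 2) (Fin 2) ℂ := !![0, 1; 1, 0]
/-- Pauli Y matrix. -/
def σy : Matrix (Fin 2) (Fin 2) ℂ := !![0, -Complex.I; Complex.I, 0]
/-- Pauli Z matrix. -/
def σz : Matrix (Fin 2) (Fin 2) ℂ := !![1, 0; 0, -1]

/-- The one-site operator `P` acting on site `i` of a collection of qubits
indexed by `ι` (identity on all other sites). -/
def pauliAt {ι : Type} [Fintype ι] [DecidableEq ι] (i : ι)
    (P : Matrix (Fin 2) (Fin 2) ℂ) : Matrix (ι → Fin 2) (ι → Fin 2) ℂ :=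
  fun v w => if ∀ j, j ≠ i → v j = w j then P (v i) (w i) else 0

/-- The tensor product `⨂ i, η i` of one-qubit operators, as a matrix on the
full Hilbert space of the qubits indexed by `ι`. -/
def tensorPauli {ι : Type} [Fintype ι] [DecidableEq ι]
    (η : ι → Matrix (Fin 2) (Fin 2) ℂ) : Matrix (ι → Fin 2) (ι → Fin 2) ℂ :=
  fun v w => ∏ i, η i (v i) (w i)

/-- Partial trace over the sites satisfying `p`; the result is an operator on
the qubits at the remaining sites. -/
def traceOut {ι : Type} [Fintype ι] [DecidableEq ι] (p : ι → Prop) [DecidablePred p]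
    (M : Matrix (ι → Fin 2) (ι → Fin 2) ℂ) :
    Matrix ({i // ¬ p i} → Fin 2) ({i // ¬ p i} → Fin 2) ℂ :=
  fun v w => ∑ u : {i : ι // p i} → Fin 2,
    M (fun i => if h : p i then u ⟨i, h⟩ else v ⟨i, h⟩)
      (fun i => if h : p i then u ⟨i, h⟩ else w ⟨i, h⟩)

/-- The transverse-field Ising Hamiltonian
`H = -∑_{i=1}^{N-1} Jᵢ σᵢ^z σ_{i+1}^z - ∑_{i=1}^N hᵢ σᵢ^x` on a chain of
`N = K + 1` qubits. -/
def chainH (K : ℕ) (J : Fin K → ℝ) (h : Fin (K + 1) → ℝ) :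
    Matrix (Fin (K + 1) → Fin 2) (Fin (K + 1) → Fin 2) ℂ :=
  -∑ i : Fin K, (J i : ℂ) • (pauliAt i.castSucc σz * pauliAt i.succ σz)
    - ∑ i : Fin (K + 1), (h i : ℂ) • pauliAt i σx

/-- The Hamiltonian `H″ = -∑_{i=L}^{N-1} (Jᵢ σᵢ^z σ_{i+1}^z + h_{i+1} σ_{i+1}^x)`,
acting on the qubits at sites `L, …, N`. -/
def chainHright (K : ℕ) (J : Fin K → ℝ) (h : Fin (K + 1) → ℝ) (L : Fin (K + 1)) :
    Matrix ({i : Fin (K + 1) // ¬ i < L} → Fin 2)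
      ({i : Fin (K + 1) // ¬ i < L} → Fin 2) ℂ :=
  -∑ i : Fin K,
    if hi : L ≤ i.castSucc then
      (J i : ℂ) • (pauliAt (⟨i.castSucc, not_lt.mpr hi⟩ : {j : Fin (K + 1) // ¬ j < L}) σz *
          pauliAt (⟨i.succ, not_lt.mpr (hi.trans i.castSucc_le_succ)⟩ :
            {j : Fin (K + 1) // ¬ j < L}) σz)
        + (h i.succ : ℂ) • pauliAt (⟨i.succ, not_lt.mpr (hi.trans i.castSucc_le_succ)⟩ :
            {j : Fin (K + 1) // ¬ j < L}) σx
    else 0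

open Kronecker

/-!
Let `U` be the involution that, controlled by the spin at site `L`, flips every spin at a
site `i < L`, so that a left spin is recorded relative to the spin at `L`. Conjugation by `U`
turns `σᶻᵢ` (`i < L`) into `σᶻᵢ σᶻ_L` and fixes `σᶻᵢ` (`i ≥ L`) and `σˣᵢ` (`i ≠ L`). As
`(σᶻ_L)² = 1` and `h_L = 0`, this gives `U H U = A ⊗ 1 + 1 ⊗ H″` with `A` acting on the sites
`< L`, hence `e^{-βH} = U (e^{-βA} ⊗ e^{-βH″}) U`. Since `H″` commutes with `σᶻ_L`, `e^{-βH″}`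
is block diagonal in the spin at `L`, and on each block `U` merely relabels the left
configurations, so the partial trace over the sites `< L` is `tr e^{-βA} • e^{-βH″}`.
Normalizing cancels `tr e^{-βA}`, which is nonzero because `H` is Hermitian.
-/

namespace Matrix

section Shift

variable {R G H : Type*} [Semiring R] [AddGroup G] [DecidableEq G] [AddGroup H]
  [DecidableEq H]

def shiftMatrix (a : G) : Matrix G G R := of fun v w => if w = v + a then 1 else 0

@[simp]
lemma shiftMatrix_apply (a v w : G) :
    (shiftMatrix a : Matrix G G R) v w = if w = v + a then 1 else 0 :=
  rfl

@[simp]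
lemma shiftMatrix_zero : (shiftMatrix 0 : Matrix G G R) = 1 := by
  ext v w
  simp [one_apply, eq_comm]

lemma shiftMatrix_prod (a : G) (b : H) :
    (shiftMatrix (a, b) : Matrix (G × H) (G × H) R) = shiftMatrix a ⊗ₖ shiftMatrix b := by
  ext v w
  simp only [shiftMatrix_apply, kroneckerMap_apply, Prod.ext_iff, Prod.fst_add,
    Prod.snd_add, ite_zero_mul_ite_zero, mul_one]

lemma submatrix_shiftMatrix (e : G ≃+ H) (a : H) :
    (shiftMatrix a : Matrix H H R).submatrix e e = shiftMatrix (e.symm a) := by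
  ext v w
  simp [← e.symm.apply_eq_iff_eq]

lemma shiftMatrix_mul_diagonal [Fintype G] (a : G) (d : G → R) :
    shiftMatrix a * diagonal d = diagonal (fun v => d (v + a)) * shiftMatrix a := by
  ext v w
  simp only [mul_diagonal, diagonal_mul, shiftMatrix_apply, ite_mul, zero_mul, one_mul]
  split_ifs with hw <;> simp [hw]

end Shift

section KroneckerAlgHom

variable (R : Type*) (m n : Type*) [CommSemiring R] [Fintype m] [DecidableEq m] [Fintype n]
  [DecidableEq n]

def kroneckerOneAlgHom : Matrix m m R →ₐ[R] Matrix (m × n) (m × n) R :=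
  (kroneckerAlgEquiv m n R).toAlgHom.comp Algebra.TensorProduct.includeLeft

def oneKroneckerAlgHom : Matrix n n R →ₐ[R] Matrix (m × n) (m × n) R :=
  (kroneckerAlgEquiv m n R).toAlgHom.comp Algebra.TensorProduct.includeRight

variable {R m n}

@[simp]
lemma kroneckerOneAlgHom_apply (A : Matrix m m R) : kroneckerOneAlgHom R m n A = A ⊗ₖ 1 := rfl

lemma kronecker_one_mem_range (A : Matrix m m R) : A ⊗ₖ 1 ∈ (kroneckerOneAlgHom R m n).range :=
  ⟨A, rfl⟩

@[simp]
lemma oneKroneckerAlgHom_apply (B : Matrix n n R) : oneKroneckerAlgHom R m n B = 1 ⊗ₖ B := rfl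

end KroneckerAlgHom

section Exp

variable {m n : Type*} [Fintype m] [DecidableEq m] [Fintype n] [DecidableEq n]

lemma map_exp (f : Matrix m m ℂ →ₐ[ℂ] Matrix n n ℂ) (A : Matrix m m ℂ) :
    f (NormedSpace.exp A) = NormedSpace.exp (f A) :=
  open scoped Norms.Operator in
  NormedSpace.map_exp f (LinearMap.continuous_of_finiteDimensional f.toLinearMap) A

lemma exp_kronecker_one (A : Matrix m m ℂ) :
    NormedSpace.exp (A ⊗ₖ (1 : Matrix n n ℂ)) = NormedSpace.exp A ⊗ₖ 1 :=
  (map_exp (kroneckerOneAlgHom ℂ m n) A).symm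

lemma exp_one_kronecker (B : Matrix n n ℂ) :
    NormedSpace.exp ((1 : Matrix m m ℂ) ⊗ₖ B) = 1 ⊗ₖ NormedSpace.exp B :=
  (map_exp (oneKroneckerAlgHom ℂ m n) B).symm

lemma exp_kronecker_one_add_one_kronecker (A : Matrix m m ℂ) (B : Matrix n n ℂ) :
    NormedSpace.exp (A ⊗ₖ 1 + 1 ⊗ₖ B) = NormedSpace.exp A ⊗ₖ NormedSpace.exp B := by
  have hcomm : Commute (A ⊗ₖ (1 : Matrix n n ℂ)) ((1 : Matrix m m ℂ) ⊗ₖ B) := by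
    simp only [Commute, SemiconjBy, ← mul_kronecker_mul, mul_one, one_mul]
  rw [exp_add_of_commute _ _ hcomm, exp_kronecker_one, exp_one_kronecker, ← mul_kronecker_mul,
    mul_one, one_mul]

open scoped ComplexOrder in
lemma IsHermitian.trace_exp_ne_zero [Nonempty m] {A : Matrix m m ℂ} (hA : A.IsHermitian) :
    (NormedSpace.exp A).trace ≠ 0 := by
  have hhalf : ((2⁻¹ : ℝ) • A).IsHermitian :=
    ((IsSelfAdjoint.all _).smul hA.isSelfAdjoint).isHermitian
  have hsquare : (NormedSpace.exp ((2⁻¹ : ℝ) • A))ᴴ * NormedSpace.exp ((2⁻¹ : ℝ) • A) =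
      NormedSpace.exp A := by
    rw [hhalf.exp.eq, ← exp_add_of_commute _ _ (Commute.refl _), ← add_smul]
    norm_num
  rw [← hsquare, Ne, trace_conjTranspose_mul_self_eq_zero_iff]
  exact (isUnit_exp _).ne_zero

end Exp

end Matrix

lemma fin_two_add_add_self (a b : Fin 2) : a + b + b = a := by
  fin_cases a <;> fin_cases b <;> rfl

def zSign (a : Fin 2) : ℂ := if a = 0 then 1 else -1

lemma zSign_add (a b : Fin 2) : zSign (a + b) = zSign a * zSign b := by
  fin_cases a <;> fin_cases b <;> simp [zSign]

lemma zSign_mul_self (a : Fin 2) : zSign a * zSign a = 1 := by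
  fin_cases a <;> simp [zSign]

lemma zSign_injective : Function.Injective zSign := by
  intro a b
  fin_cases a <;> fin_cases b <;> norm_num [zSign]

lemma σz_eq_diagonal : σz = diagonal zSign := by
  ext a b
  fin_cases a <;> fin_cases b <;> simp [σz, zSign]

lemma σx_apply (a b : Fin 2) : σx a b = if b = a + 1 then 1 else 0 := by
  fin_cases a <;> fin_cases b <;> simp [σx]

section PauliAt

variable {ι : Type} [Fintype ι] [DecidableEq ι]

lemma pauliAt_σz (i : ι) : pauliAt i σz = diagonal fun v => zSign (v i) := by
  ext v w
  simp only [pauliAt, σz_eq_diagonal, diagonal_apply]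
  by_cases hvw : v = w
  · simp [hvw]
  · have : ¬ ((∀ j, j ≠ i → v j = w j) ∧ v i = w i) := fun h =>
      hvw (funext fun j => if hj : j = i then hj ▸ h.2 else h.1 j hj)
    rw [← ite_and, if_neg this, if_neg hvw]

lemma pauliAt_σx (i : ι) : pauliAt i σx = Matrix.shiftMatrix (Pi.single i 1) := by
  ext v w
  simp only [pauliAt, σx_apply, Matrix.shiftMatrix_apply, ← ite_and]
  congr 1
  simp only [funext_iff, Pi.add_apply, Pi.single_apply, eq_iff_iff]
  constructor
  · rintro ⟨hoff, hi⟩ j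
    by_cases hj : j = i
    · simp [hj, hi]
    · simp [hj, hoff j hj]
  · intro h
    exact ⟨fun j hj => by simpa [hj] using (h j).symm, by simpa using h i⟩

lemma pauliAt_conjTranspose (i : ι) (P : Matrix (Fin 2) (Fin 2) ℂ) :
    (pauliAt i P)ᴴ = pauliAt i Pᴴ := by
  ext v w
  simp only [conjTranspose_apply, pauliAt, eq_comm (a := w _)]
  split_ifs <;> simp

lemma isHermitian_pauliAt {P : Matrix (Fin 2) (Fin 2) ℂ} (hP : P.IsHermitian) (i : ι) :
    (pauliAt i P).IsHermitian := by
  rw [IsHermitian, pauliAt_conjTranspose, hP.eq]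

lemma isHermitian_σx : σx.IsHermitian := by
  ext a b
  fin_cases a <;> fin_cases b <;> simp [σx]

lemma isHermitian_σz : σz.IsHermitian := by
  ext a b
  fin_cases a <;> fin_cases b <;> simp [σz]

lemma commute_pauliAt_σz (i j : ι) : Commute (pauliAt i σz) (pauliAt j σz) := by
  simp only [pauliAt_σz, Commute, SemiconjBy, diagonal_mul_diagonal, mul_comm]

lemma pauliAt_σz_mul_self (i : ι) : pauliAt i σz * pauliAt i σz = 1 := by
  rw [pauliAt_σz, diagonal_mul_diagonal, ← diagonal_one]
  congr 1
  ext v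
  exact zSign_mul_self (v i)

lemma commute_pauliAt_σx_pauliAt_σz {i j : ι} (hij : i ≠ j) :
    Commute (pauliAt i σx) (pauliAt j σz) := by
  rw [pauliAt_σx, pauliAt_σz, Commute, SemiconjBy, Matrix.shiftMatrix_mul_diagonal]
  simp [hij.symm]

lemma apply_eq_zero_of_commute_pauliAt_σz {Q : Matrix (ι → Fin 2) (ι → Fin 2) ℂ} {i : ι}
    (hQ : Commute Q (pauliAt i σz)) {v w : ι → Fin 2} (hvw : v i ≠ w i) : Q v w = 0 := by
  have hentry := congrFun (congrFun hQ.eq v) w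
  rw [pauliAt_σz, mul_diagonal, diagonal_mul] at hentry
  have hsign : zSign (w i) - zSign (v i) ≠ 0 := sub_ne_zero.mpr (zSign_injective.ne hvw.symm)
  have hzero : Q v w * (zSign (w i) - zSign (v i)) = 0 := by linear_combination hentry
  exact (mul_eq_zero.mp hzero).resolve_right hsign

end PauliAt

section ControlledFlip

variable {ι : Type} (p : ι → Prop) [DecidablePred p] (c : {i // ¬ p i})

def controlledFlip : ({i // p i} → Fin 2) × ({i // ¬ p i} → Fin 2) ≃+ (ι → Fin 2) where
  toFun xy i := if h : p i then xy.1 ⟨i, h⟩ + xy.2 c else xy.2 ⟨i, h⟩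
  invFun v := (fun j => v j + v c, fun j => v j)
  left_inv xy := by
    ext j
    · simp [j.2, c.2, fin_two_add_add_self]
    · simp [j.2]
  right_inv v := by
    ext i
    by_cases h : p i <;> simp [h, fin_two_add_add_self]
  map_add' xy xy' := by
    ext i
    by_cases h : p i
    · simp only [h, dite_true, Prod.fst_add, Prod.snd_add, Pi.add_apply, add_add_add_comm]
    · simp [h]

lemma controlledFlip_symm_apply (v : ι → Fin 2) :
    (controlledFlip p c).symm v =
      (fun j : {i // p i} => v j + v c, fun j : {i // ¬ p i} => v j) :=
  rfl

lemma controlledFlip_symm_dite (u : {i // p i} → Fin 2) (v : {i // ¬ p i} → Fin 2) :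
    (controlledFlip p c).symm (fun i => if h : p i then u ⟨i, h⟩ else v ⟨i, h⟩) =
      (u + fun _ => v c, v) := by
  ext j
  · simp [controlledFlip_symm_apply, j.2, c.2]
  · simp [controlledFlip_symm_apply, j.2]

variable [Fintype ι] [DecidableEq ι]

/-- `M ↦ U M U`, read in the basis of pairs (left configuration, right configuration), where `U`
flips the spins at the sites in `p` controlled by the spin at `c`. -/
def controlledFlipConj :
    Matrix (ι → Fin 2) (ι → Fin 2) ℂ ≃ₐ[ℂ]
      Matrix (({i // p i} → Fin 2) × ({i // ¬ p i} → Fin 2))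
        (({i // p i} → Fin 2) × ({i // ¬ p i} → Fin 2)) ℂ :=
  reindexAlgEquiv ℂ ℂ (controlledFlip p c).toEquiv.symm

lemma controlledFlipConj_apply (M : Matrix (ι → Fin 2) (ι → Fin 2) ℂ) :
    controlledFlipConj p c M = M.submatrix (controlledFlip p c) (controlledFlip p c) :=
  rfl

lemma controlledFlipConj_symm_apply
    (N : Matrix (({i // p i} → Fin 2) × ({i // ¬ p i} → Fin 2))
      (({i // p i} → Fin 2) × ({i // ¬ p i} → Fin 2)) ℂ) :
    (controlledFlipConj p c).symm N =
      N.submatrix (controlledFlip p c).symm (controlledFlip p c).symm :=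
  rfl

lemma trace_controlledFlipConj_symm
    (N : Matrix (({i // p i} → Fin 2) × ({i // ¬ p i} → Fin 2))
      (({i // p i} → Fin 2) × ({i // ¬ p i} → Fin 2)) ℂ) :
    ((controlledFlipConj p c).symm N).trace = N.trace :=
  Equiv.sum_comp (controlledFlip p c).symm.toEquiv fun xy => N xy xy

lemma controlledFlipConj_pauliAt_σz_of_pos {i : ι} (hi : p i) :
    controlledFlipConj p c (pauliAt i σz) = pauliAt ⟨i, hi⟩ σz ⊗ₖ pauliAt c σz := by
  rw [controlledFlipConj_apply, pauliAt_σz, pauliAt_σz, pauliAt_σz, diagonal_kronecker_diagonal]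
  refine (submatrix_diagonal_equiv _ (controlledFlip p c).toEquiv).trans (congrArg _ ?_)
  ext xy
  simp [controlledFlip, hi, zSign_add]

lemma controlledFlipConj_pauliAt_σz_of_neg {i : ι} (hi : ¬ p i) :
    controlledFlipConj p c (pauliAt i σz) = 1 ⊗ₖ pauliAt ⟨i, hi⟩ σz := by
  rw [controlledFlipConj_apply, pauliAt_σz, pauliAt_σz, ← diagonal_one,
    diagonal_kronecker_diagonal]
  refine (submatrix_diagonal_equiv _ (controlledFlip p c).toEquiv).trans (congrArg _ ?_)
  ext xy
  simp [controlledFlip, hi]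

lemma controlledFlipConj_pauliAt_σx_of_pos {i : ι} (hi : p i) :
    controlledFlipConj p c (pauliAt i σx) = pauliAt ⟨i, hi⟩ σx ⊗ₖ 1 := by
  rw [controlledFlipConj_apply, pauliAt_σx, pauliAt_σx, Matrix.submatrix_shiftMatrix,
    ← Matrix.shiftMatrix_zero, ← Matrix.shiftMatrix_prod]
  congr 1
  ext j
  · have hci : (c : ι) ≠ i := fun h => c.2 (h ▸ hi)
    simp [controlledFlip_symm_apply, Pi.single_apply, Subtype.ext_iff, hci]
  · have hji : (j : ι) ≠ i := fun h => j.2 (h ▸ hi)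
    simp [controlledFlip_symm_apply, hji]

lemma controlledFlipConj_pauliAt_σx_of_neg {i : ι} (hi : ¬ p i) (hic : i ≠ c) :
    controlledFlipConj p c (pauliAt i σx) = 1 ⊗ₖ pauliAt ⟨i, hi⟩ σx := by
  rw [controlledFlipConj_apply, pauliAt_σx, pauliAt_σx, Matrix.submatrix_shiftMatrix,
    ← Matrix.shiftMatrix_zero, ← Matrix.shiftMatrix_prod]
  congr 1
  ext j
  · have hji : (j : ι) ≠ i := fun h => hi (h ▸ j.2)
    simp [controlledFlip_symm_apply, hji, hic.symm]
  · simp [controlledFlip_symm_apply, Pi.single_apply, Subtype.ext_iff]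

lemma traceOut_controlledFlipConj_symm_kronecker
    (P : Matrix ({i // p i} → Fin 2) ({i // p i} → Fin 2) ℂ)
    {Q : Matrix ({i // ¬ p i} → Fin 2) ({i // ¬ p i} → Fin 2) ℂ}
    (hQ : ∀ v w, v c ≠ w c → Q v w = 0) :
    traceOut p ((controlledFlipConj p c).symm (P ⊗ₖ Q)) = P.trace • Q := by
  ext v w
  simp only [traceOut, controlledFlipConj_symm_apply, submatrix_apply, controlledFlip_symm_dite,
    kronecker_apply, Matrix.smul_apply, smul_eq_mul, ← Finset.sum_mul]
  by_cases hvw : v c = w c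
  · rw [hvw]
    exact congrArg (· * Q v w) (Equiv.sum_comp (Equiv.addRight _) fun u => P u u)
  · simp [hQ v w hvw]

lemma exp_smul_eq_controlledFlipConj_symm {H : Matrix (ι → Fin 2) (ι → Fin 2) ℂ}
    {A : Matrix ({i // p i} → Fin 2) ({i // p i} → Fin 2) ℂ}
    {B : Matrix ({i // ¬ p i} → Fin 2) ({i // ¬ p i} → Fin 2) ℂ}
    (hsplit : controlledFlipConj p c H = A ⊗ₖ 1 + 1 ⊗ₖ B) (s : ℂ) :
    NormedSpace.exp (s • H) =
      (controlledFlipConj p c).symm (NormedSpace.exp (s • A) ⊗ₖ NormedSpace.exp (s • B)) := by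
  rw [AlgEquiv.eq_symm_apply, ← AlgEquiv.coe_toAlgHom, Matrix.map_exp, AlgEquiv.coe_toAlgHom,
    map_smul, hsplit, smul_add, ← smul_kronecker, ← kronecker_smul,
    Matrix.exp_kronecker_one_add_one_kronecker]

theorem gibbs_traceOut_eq_of_controlledFlipConj {H : Matrix (ι → Fin 2) (ι → Fin 2) ℂ}
    (hH : H.IsHermitian) {A : Matrix ({i // p i} → Fin 2) ({i // p i} → Fin 2) ℂ}
    {B : Matrix ({i // ¬ p i} → Fin 2) ({i // ¬ p i} → Fin 2) ℂ}
    (hsplit : controlledFlipConj p c H = A ⊗ₖ 1 + 1 ⊗ₖ B) (hB : Commute B (pauliAt c σz))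
    (β : ℝ) :
    (NormedSpace.exp ((-(β : ℂ)) • H)).trace⁻¹ •
        traceOut p (NormedSpace.exp ((-(β : ℂ)) • H)) =
      (NormedSpace.exp ((-(β : ℂ)) • B)).trace⁻¹ • NormedSpace.exp ((-(β : ℂ)) • B) := by
  set P := NormedSpace.exp ((-(β : ℂ)) • A)
  set Q := NormedSpace.exp ((-(β : ℂ)) • B)
  have hexp := exp_smul_eq_controlledFlipConj_symm p c hsplit (-(β : ℂ))
  have hQ : ∀ v w, v c ≠ w c → Q v w = 0 := fun v w =>
    apply_eq_zero_of_commute_pauliAt_σz ((hB.smul_left _).exp_left)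
  have htrace : (NormedSpace.exp ((-(β : ℂ)) • H)).trace = P.trace * Q.trace := by
    rw [hexp, trace_controlledFlipConj_symm, trace_kronecker]
  have hP : P.trace ≠ 0 := by
    refine left_ne_zero_of_mul (htrace ▸ IsHermitian.trace_exp_ne_zero ?_)
    have hβ : IsSelfAdjoint (-(β : ℂ)) := by simp [isSelfAdjoint_iff]
    exact (hβ.smul hH.isSelfAdjoint).isHermitian
  rw [htrace, hexp, traceOut_controlledFlipConj_symm_kronecker p c P hQ, smul_smul, mul_inv,
    mul_right_comm, inv_mul_cancel₀ hP, one_mul]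

end ControlledFlip

section IsingChain

variable {K : ℕ} (J : Fin K → ℝ) (h : Fin (K + 1) → ℝ) (L : Fin (K + 1))

def isingBond (i : Fin K) : Matrix (Fin (K + 1) → Fin 2) (Fin (K + 1) → Fin 2) ℂ :=
  (J i : ℂ) • (pauliAt i.castSucc σz * pauliAt i.succ σz) + (h i.succ : ℂ) • pauliAt i.succ σx

lemma chainH_eq_sub_sum_isingBond :
    chainH K J h = -((h 0 : ℂ) • pauliAt 0 σx) - ∑ i, isingBond J h i := by
  simp only [chainH, Fin.sum_univ_succ, isingBond, Finset.sum_add_distrib]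
  abel

lemma isHermitian_chainH : (chainH K J h).IsHermitian := by
  have hreal (r : ℝ) : IsSelfAdjoint (r : ℂ) := Complex.conj_ofReal r
  have hZ (i : Fin (K + 1)) : IsSelfAdjoint (pauliAt i σz) :=
    (isHermitian_pauliAt isHermitian_σz i).isSelfAdjoint
  refine IsSelfAdjoint.isHermitian (((isSelfAdjoint_sum _ fun i _ => ?_).neg).sub
    (isSelfAdjoint_sum _ fun i _ => ?_))
  · exact (hreal _).smul (((hZ _).commute_iff (hZ _)).mp (commute_pauliAt_σz _ _))
  · exact (hreal _).smul (isHermitian_pauliAt isHermitian_σx i).isSelfAdjoint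

lemma commute_chainHright_pauliAt_σz :
    Commute (chainHright K J h L) (pauliAt ⟨L, lt_irrefl L⟩ σz) := by
  refine (Commute.sum_left _ _ _ fun i _ => ?_).neg_left
  split_ifs with hi
  · refine (((commute_pauliAt_σz _ _).mul_left (commute_pauliAt_σz _ _)).smul_left _).add_left
      ((commute_pauliAt_σx_pauliAt_σz ?_).smul_left _)
    exact fun heq => (hi.trans_lt i.castSucc_lt_succ).ne' (congrArg Subtype.val heq)
  · exact Commute.zero_left _

lemma controlledFlipConj_isingBond_of_le {i : Fin K} (hi : L ≤ i.castSucc) :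
    controlledFlipConj (· < L) ⟨L, lt_irrefl L⟩ (isingBond J h i) =
      1 ⊗ₖ ((J i : ℂ) •
          (pauliAt (⟨i.castSucc, not_lt.mpr hi⟩ : {j : Fin (K + 1) // ¬ j < L}) σz *
            pauliAt (⟨i.succ, not_lt.mpr (hi.trans i.castSucc_le_succ)⟩ :
            {j : Fin (K + 1) // ¬ j < L}) σz)
        + (h i.succ : ℂ) • pauliAt (⟨i.succ, not_lt.mpr (hi.trans i.castSucc_le_succ)⟩ :
            {j : Fin (K + 1) // ¬ j < L}) σx) := by
  have hsucc : L < i.succ := hi.trans_lt i.castSucc_lt_succ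
  rw [isingBond, map_add, map_smul, map_smul, map_mul,
    controlledFlipConj_pauliAt_σz_of_neg (· < L) _ (not_lt.mpr hi),
    controlledFlipConj_pauliAt_σz_of_neg (· < L) _ (not_lt.mpr hsucc.le),
    controlledFlipConj_pauliAt_σx_of_neg (· < L) _ (not_lt.mpr hsucc.le) hsucc.ne',
    ← mul_kronecker_mul, one_mul, kronecker_add, kronecker_smul, kronecker_smul]

lemma controlledFlipConj_isingBond_mem_range (hfield : h L = 0) {i : Fin K}
    (hi : i.castSucc < L) :
    controlledFlipConj (· < L) ⟨L, lt_irrefl L⟩ (isingBond J h i) ∈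
      (kroneckerOneAlgHom ℂ _ _).range := by
  rw [isingBond, map_add, map_smul, map_smul, map_mul,
    controlledFlipConj_pauliAt_σz_of_pos (· < L) _ hi]
  rcases (Fin.castSucc_lt_iff_succ_le.mp hi).lt_or_eq with hsucc | hsucc
  · rw [controlledFlipConj_pauliAt_σz_of_pos (· < L) _ hsucc,
      controlledFlipConj_pauliAt_σx_of_pos (· < L) _ hsucc, ← mul_kronecker_mul,
      pauliAt_σz_mul_self]
    exact add_mem (Subalgebra.smul_mem _ (kronecker_one_mem_range _) _)
      (Subalgebra.smul_mem _ (kronecker_one_mem_range _) _)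
  · -- the bond ending at `L`: its `σᶻ_L` squares away and `h_L = 0` removes the flip at `L`
    rw [hsucc, hfield, controlledFlipConj_pauliAt_σz_of_neg (· < L) _ (lt_irrefl L),
      ← mul_kronecker_mul, mul_one, pauliAt_σz_mul_self, Complex.ofReal_zero, zero_smul,
      add_zero]
    exact Subalgebra.smul_mem _ (kronecker_one_mem_range _) _

lemma controlledFlipConj_smul_pauliAt_zero_σx_mem_range (hfield : h L = 0) :
    controlledFlipConj (· < L) ⟨L, lt_irrefl L⟩ ((h 0 : ℂ) • pauliAt 0 σx) ∈
      (kroneckerOneAlgHom ℂ _ _).range := by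
  rcases (Fin.zero_le L).lt_or_eq with hL | hL
  · rw [map_smul, controlledFlipConj_pauliAt_σx_of_pos (· < L) _ hL]
    exact Subalgebra.smul_mem _ (kronecker_one_mem_range _) _
  · rw [hL, hfield, Complex.ofReal_zero, zero_smul, map_zero]
    exact zero_mem _

lemma exists_controlledFlipConj_chainH_eq (hfield : h L = 0) :
    ∃ A, controlledFlipConj (· < L) ⟨L, lt_irrefl L⟩ (chainH K J h) =
      A ⊗ₖ 1 + 1 ⊗ₖ chainHright K J h L := by
  suffices controlledFlipConj (· < L) ⟨L, lt_irrefl L⟩ (chainH K J h) -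
      1 ⊗ₖ chainHright K J h L ∈ (kroneckerOneAlgHom ℂ _ _).range by
    obtain ⟨A, hA⟩ := this
    exact ⟨A, sub_eq_iff_eq_add.mp hA.symm⟩
  rw [chainH_eq_sub_sum_isingBond, ← oneKroneckerAlgHom_apply, chainHright, map_sub, map_neg,
    map_sum, map_neg, map_sum]
  rw [sub_neg_eq_add, sub_add, ← Finset.sum_sub_distrib]
  refine sub_mem (neg_mem (controlledFlipConj_smul_pauliAt_zero_σx_mem_range h L hfield))
    (sum_mem fun i _ => ?_)
  split_ifs with hi
  · rw [controlledFlipConj_isingBond_of_le J h L hi, oneKroneckerAlgHom_apply, sub_self]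
    exact zero_mem _
  · rw [map_zero, sub_zero]
    exact controlledFlipConj_isingBond_mem_range J h L hfield (not_le.mp hi)

end IsingChain

theorem shielding_ising_chain_general (K : ℕ) (J : Fin K → ℝ) (h : Fin (K + 1) → ℝ) (β : ℝ)
    (L : Fin (K + 1)) (hfield : h L = 0) :
    (Matrix.trace (NormedSpace.exp ((-(β : ℂ)) • chainH K J h)))⁻¹ •
        traceOut (fun i : Fin (K + 1) => i < L)
          (NormedSpace.exp ((-(β : ℂ)) • chainH K J h)) =
      (Matrix.trace (NormedSpace.exp ((-(β : ℂ)) • chainHright K J h L)))⁻¹ •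
        NormedSpace.exp ((-(β : ℂ)) • chainHright K J h L) := by
  obtain ⟨A, hsplit⟩ := exists_controlledFlipConj_chainH_eq J h L hfield
  exact gibbs_traceOut_eq_of_controlledFlipConj _ _ (isHermitian_chainH J h) hsplit
    (commute_chainHright_pauliAt_σz J h L) β

theorem shielding_ising_chain (K : ℕ) (J : Fin K → ℝ) (h : Fin (K + 1) → ℝ) (β : ℝ)
    (L : Fin (K + 1)) (hL0 : 0 < L) (hLtop : L < Fin.last K) (hfield : h L = 0) :
    (Matrix.trace (NormedSpace.exp ((-(β : ℂ)) • chainH K J h)))⁻¹ •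
        traceOut (fun i : Fin (K + 1) => i < L)
          (NormedSpace.exp ((-(β : ℂ)) • chainH K J h)) =
      (Matrix.trace (NormedSpace.exp ((-(β : ℂ)) • chainHright K J h L)))⁻¹ •
        NormedSpace.exp ((-(β : ℂ)) • chainHright K J h L) :=
  shielding_ising_chain_general K J h β L hfield
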